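/- Let Γ_PFS-DSA be the rule system obtained from Γ_DSA by replacing the rules Bottom-Up-1 and Top-Down-1 with their partially flow-sensitive versions, which at each call site i and return site j use an externally supplied flow-sensitive relation ↦_{F,i} that is a subset of ↦_F (i.e., whenever x ↦_{F,i} H then Γ_PFS-DSA ⊢_P x ↦_F H). Let Γ_TeaDsa be the rule system obtained from Γ_PFS-DSA by replacing the points-to relation with the typed relation ↦^T (x ↦^T H meaning x may point to abstract object H with type tag T) and replacing the Alloc, Load, and Store rules by their type-aware versions Γ_Ty with respect to a type-compatibility partial order ⊑ on types. Then for every program P, function F, register or abstract object x, abstract object H, and type T: if Γ_PFS-DSA ⊬_P x ↦_F H, then Γ_TeaDsa ⊬_P x ↦^T_F H. Equivalently, every typed fact x ↦^T_F H derivable by Γ_TeaDsa has its type-erased counterpart x ↦_F H derivable by Γ_PFS-DSA: the type-aware analysis is at least as precise as the type-unaware one. -/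
import Mathlib


/-! ## Syntax of the simple LLVM-like language -/

/-- Structure fields: each allocation has exactly two fields `a` and `b`. -/
inductive Fld | a | b
deriving DecidableEq

/-- Base (scalar) types: `BT ::= int | float | char`. -/
inductive BTy | int | float | char
deriving DecidableEq

/-- All types: `T ::= BT ∪ PT` where `PT ::= BT* | BT**`. -/
inductive Ty | base (b : BTy) | ptr1 (b : BTy) | ptr2 (b : BTy)
deriving DecidableEq

/-- Pointer types: `PT ::= BT* | BT**`. -/
inductive PTy | ptr1 (b : BTy) | ptr2 (b : BTy)
deriving DecidableEq

/-- The type obtained by dereferencing a pointer type. -/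
def PTy.pointee : PTy → Ty
  | .ptr1 b => .base b
  | .ptr2 b => .ptr1 b

/-- The pointer type seen as a type. -/
def PTy.toTy : PTy → Ty
  | .ptr1 b => .ptr1 b
  | .ptr2 b => .ptr2 b

abbrev Reg := ℕ
abbrev FnName := ℕ
abbrev Site := ℕ

/-- Instructions of the simple language. -/
inductive Instr
  | alloc (site : Site) (r : Reg)
  | cast (r : Reg) (t : Ty) (p : Reg)
  | load (r : Reg) (t : PTy) (p : Reg)
  | store (r : Reg) (t : PTy) (p : Reg)
  | gep (r : Reg) (t : PTy) (p : Reg) (f : Fld)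
  | call (site : Site) (ys : List Reg) (callee : FnName) (xs : List Reg)
  | ret (site : Site) (zs : List Reg)

/-- A function: a name, a declaration site, formal argument registers and an
unordered bag of instructions (represented as a list; no rule uses the order). -/
structure Func where
  name : FnName
  declSite : Site
  formals : List Reg
  body : List Instr

/-- A program is a finite set (bag) of functions. -/
abbrev Program := List Func

/-- Abstract objects: one per field of each allocation site, plus the six
`formal` abstract objects `V_{i,k}^{a}, V_{i,k}^{b}, V_{i,k}^{aa}, V_{i,k}^{ab},
V_{i,k}^{ba}, V_{i,k}^{bb}` for the `k`-th formal argument of the function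
declared at site `i` (`f2 = none` encodes a first-level formal `V^{f1}`,
`f2 = some _` a second-level formal `V^{f1 f2}`). -/
inductive Obj
  | allocSite (i : Site) (f : Fld)
  | formal (i : Site) (k : ℕ) (f1 : Fld) (f2 : Option Fld)
deriving DecidableEq

/-- A node of a points-to graph: a register or an abstract object. -/
inductive Node
  | reg (r : Reg)
  | obj (o : Obj)
deriving DecidableEq

def Fld.flip : Fld → Fld | .a => .b | .b => .a

/-- The field an abstract object corresponds to. -/
def Obj.fld : Obj → Fld
  | .allocSite _ f => f
  | .formal _ _ f1 none => f1
  | .formal _ _ _ (some f2) => f2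

/-- The sibling abstract object (the other field of the same allocation). -/
def Obj.sib : Obj → Obj
  | .allocSite i f => .allocSite i f.flip
  | .formal i k f1 none => .formal i k f1.flip none
  | .formal i k f1 (some f2) => .formal i k f1 (some f2.flip)

/-- The abstract object obtained by replacing the (innermost) field. -/
def Obj.setFld : Obj → Fld → Obj
  | .allocSite i _, f => .allocSite i f
  | .formal i k _ none, f => .formal i k f none
  | .formal i k f1 (some _), f => .formal i k f1 (some f)

/-- `InstrIn P F ins`: instruction `ins` belongs to function `F` of program `P`. -/
def InstrIn (P : Program) (F : FnName) (ins : Instr) : Prop :=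
  ∃ fn ∈ P, fn.name = F ∧ ins ∈ fn.body

/-- `FnDecl P F j frms`: function `F` is declared in `P` at site `j` with
formal argument registers `frms`. -/
def FnDecl (P : Program) (F : FnName) (j : Site) (frms : List Reg) : Prop :=
  ∃ fn ∈ P, fn.name = F ∧ fn.declSite = j ∧ fn.formals = frms

/-- `IsFormalOf P g o`: `o` is one of the formal abstract objects of function `g`. -/
def IsFormalOf (P : Program) (g : FnName) (o : Obj) : Prop :=
  ∃ j frms k f1 f2, FnDecl P g j frms ∧ k < frms.length ∧ o = Obj.formal j k f1 f2

/-- The edges introduced by the `Γ_Formals` rules for the `k`-th formal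
argument (register `fr`) of a function declared at site `j`:
`f_k ↦ V^a`, `V^a ↦ V^{aa}`, `V^b ↦ V^{ba}`, and each second-level formal
points to itself. -/
inductive FormalEdge (j : Site) (k : ℕ) (fr : Reg) : Node → Obj → Prop
  | arg : FormalEdge j k fr (.reg fr) (.formal j k .a none)
  | lvlA : FormalEdge j k fr (.obj (.formal j k .a none)) (.formal j k .a (some .a))
  | lvlB : FormalEdge j k fr (.obj (.formal j k .b none)) (.formal j k .b (some .a))
  | selfLoop (f1 f2 : Fld) :
      FormalEdge j k fr (.obj (.formal j k f1 (some f2))) (.formal j k f1 (some f2))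

/-! ## Rule names and rule sets -/

/-- Names of the inference rules of the DSA-style analysis. -/
inductive RuleName
  | alloc | cast | load | store | gep | formals
  | uIncoming | uOutgoing
  | bu1 | bu2 | td1 | td2
  | pbu1 | ptd1
deriving DecidableEq

/-- Inclusion-based rules `Γ_I` (Alloc, Cast, Load, Store). -/
def ΓI : Set RuleName := {.alloc, .cast, .load, .store}
/-- Field-sensitivity rules `Γ_Fld`. -/
def ΓFld : Set RuleName := {.gep}
/-- Unification rules `Γ_U`. -/
def ΓU : Set RuleName := {.uIncoming, .uOutgoing}
/-- Formal-argument rules `Γ_Formals`. -/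
def ΓFormals : Set RuleName := {.formals}
/-- Local rules `Γ_L = Γ_I ∪ Γ_Fld ∪ Γ_U ∪ Γ_Formals`. -/
def ΓL : Set RuleName := ΓI ∪ ΓFld ∪ ΓU ∪ ΓFormals
/-- Bottom-up rules `Γ_BU`. -/
def ΓBU : Set RuleName := {.bu1, .bu2}
/-- Top-down rules `Γ_TD`. -/
def ΓTD : Set RuleName := {.td1, .td2}

/-! ## Derivability

`Derives P fs Γ F x H` formalizes `Γ ⊢_P x ↦_F H`: the fact `x ↦_F H` is derivable
by exhaustively applying the rules of `Γ` to the program `P` (the least family of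
relations `↦_F` closed under the rules of `Γ`).  It is defined mutually with the
resolution relation `Resolve P fs Γ i callee xs J H`, which maps at the call site
`i : y⃗ = callee(x⃗)` each abstract object `J` of the callee to a caller abstract
object `H`: allocation sites are resolved to themselves, and the formals of the
callee are resolved to the caller objects passed at the call (reachable from the
actual arguments `x⃗` in the caller). -/

mutual

inductive Derives (P : Program) (fs : FnName → Site → Node → Obj → Prop)
    (Γ : Set RuleName) : FnName → Node → Obj → Prop
  /-- Alloc: `i: r = alloc()` gives `r ↦ H_i` (pointer to the first field). -/
  | rAlloc {F : FnName} {i : Site} {r : Reg} :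
      RuleName.alloc ∈ Γ → InstrIn P F (.alloc i r) →
      Derives P fs Γ F (.reg r) (.allocSite i .a)
  /-- Cast: `r = cast T, p` and `p ↦ H` give `r ↦ H`. -/
  | rCast {F : FnName} {r : Reg} {t : Ty} {p : Reg} {H : Obj} :
      RuleName.cast ∈ Γ → InstrIn P F (.cast r t p) →
      Derives P fs Γ F (.reg p) H →
      Derives P fs Γ F (.reg r) H
  /-- Load: `r = load PT p`, `p ↦ H`, `H ↦ I` give `r ↦ I`. -/
  | rLoad {F : FnName} {r : Reg} {t : PTy} {p : Reg} {H I : Obj} :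
      RuleName.load ∈ Γ → InstrIn P F (.load r t p) →
      Derives P fs Γ F (.reg p) H → Derives P fs Γ F (.obj H) I →
      Derives P fs Γ F (.reg r) I
  /-- Store: `store r, PT p`, `p ↦ I`, `r ↦ H` give `I ↦ H`. -/
  | rStore {F : FnName} {r : Reg} {t : PTy} {p : Reg} {H I : Obj} :
      RuleName.store ∈ Γ → InstrIn P F (.store r t p) →
      Derives P fs Γ F (.reg p) I → Derives P fs Γ F (.reg r) H →
      Derives P fs Γ F (.obj I) H
  /-- GEP with field `a`: `r = gep PT p, a` and `p ↦ H` give `r ↦ H`. -/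
  | rGepA {F : FnName} {r : Reg} {t : PTy} {p : Reg} {H : Obj} :
      RuleName.gep ∈ Γ → InstrIn P F (.gep r t p .a) →
      Derives P fs Γ F (.reg p) H →
      Derives P fs Γ F (.reg r) H
  /-- GEP with field `b`: `r = gep PT p, b`, `p ↦ H`, `fld(H) = a` give
  `r ↦ siblingObj(H)`. -/
  | rGepB {F : FnName} {r : Reg} {t : PTy} {p : Reg} {H : Obj} :
      RuleName.gep ∈ Γ → InstrIn P F (.gep r t p .b) →
      Derives P fs Γ F (.reg p) H → H.fld = .a →
      Derives P fs Γ F (.reg r) H.sib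
  /-- Formals: the `Γ_Formals` edges for each formal argument of `F`. -/
  | rFormals {F : FnName} {j : Site} {frms : List Reg} {k : ℕ} {fr : Reg}
      {x : Node} {H : Obj} :
      RuleName.formals ∈ Γ → FnDecl P F j frms →
      k < frms.length → frms[k]? = some fr → FormalEdge j k fr x H →
      Derives P fs Γ F x H
  /-- Unification, Incoming rules: `x ↦ H`, `x ↦ I`, `y ↦ I` give `y ↦ H`
  (`x`, `y` range over registers and abstract objects, covering both
  Incoming rules of `Γ_U`). -/
  | rUIncoming {F : FnName} {x y : Node} {H I : Obj} :
      RuleName.uIncoming ∈ Γ →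
      Derives P fs Γ F x H → Derives P fs Γ F x I → Derives P fs Γ F y I →
      Derives P fs Γ F y H
  /-- Unification, Outgoing rules: `x ↦ H`, `H ↦ J`, `x ↦ I`, `I ↦ K` give
  `H ↦ K` (`x` ranges over registers and abstract objects, covering both
  Outgoing rules of `Γ_U`). -/
  | rUOutgoing {F : FnName} {x : Node} {H I J K : Obj} :
      RuleName.uOutgoing ∈ Γ →
      Derives P fs Γ F x H → Derives P fs Γ F (.obj H) J →
      Derives P fs Γ F x I → Derives P fs Γ F (.obj I) K →
      Derives P fs Γ F (.obj H) K
  /-- Bottom-Up-1: at `i: y⃗ = callee(x⃗)` in the caller and `j: return z⃗` in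
  the callee, from `z_k ↦_callee H` and `Resolve(i, H, I)` derive
  `y_k ↦_caller I`. -/
  | rBU1 {caller callee : FnName} {i j : Site} {ys xs zs : List Reg} {k : ℕ}
      {zk yk : Reg} {H I : Obj} :
      RuleName.bu1 ∈ Γ →
      InstrIn P caller (.call i ys callee xs) → InstrIn P callee (.ret j zs) →
      zs[k]? = some zk → ys[k]? = some yk →
      Derives P fs Γ callee (.reg zk) H → Resolve P fs Γ i callee xs H I →
      Derives P fs Γ caller (.reg yk) I
  /-- Bottom-Up-2: from `J ↦_callee K` with `J` accessible in the callee,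
  `Resolve(i, J, H)` and `Resolve(i, K, I)` derive `H ↦_caller I`. -/
  | rBU2 {caller callee : FnName} {i : Site} {ys xs : List Reg} {y : Node}
      {J K H I : Obj} :
      RuleName.bu2 ∈ Γ →
      InstrIn P caller (.call i ys callee xs) →
      Derives P fs Γ callee y J →
      Derives P fs Γ callee (.obj J) K →
      Resolve P fs Γ i callee xs J H → Resolve P fs Γ i callee xs K I →
      Derives P fs Γ caller (.obj H) I
  /-- Top-Down-1: from `x_k ↦_caller H` and `Resolve(i, I, H)` derive
  `f_k ↦_callee I` for the `k`-th formal of the callee. -/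
  | rTD1 {caller callee : FnName} {i j : Site} {ys xs frms : List Reg} {k : ℕ}
      {xk fk : Reg} {H I : Obj} :
      RuleName.td1 ∈ Γ →
      InstrIn P caller (.call i ys callee xs) →
      xs[k]? = some xk → FnDecl P callee j frms → frms[k]? = some fk →
      Derives P fs Γ caller (.reg xk) H → Resolve P fs Γ i callee xs I H →
      Derives P fs Γ callee (.reg fk) I
  /-- Top-Down-2: from `H ↦_caller I` with `Resolve(i, J, H)`, `Resolve(i, K, I)`
  and `J`, `K` formals of the callee, derive `J ↦_callee K`. -/
  | rTD2 {caller callee : FnName} {i : Site} {ys xs : List Reg} {H I J K : Obj} :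
      RuleName.td2 ∈ Γ →
      InstrIn P caller (.call i ys callee xs) →
      Derives P fs Γ caller (.obj H) I →
      Resolve P fs Γ i callee xs J H → IsFormalOf P callee J →
      Resolve P fs Γ i callee xs K I → IsFormalOf P callee K →
      Derives P fs Γ callee (.obj J) K

  /-- Partially flow-sensitive Bottom-Up-1: at `i: y⃗ = callee(x⃗)` and
  `j: return z⃗`, from the flow-sensitive fact `z_k ↦_{callee, j} H` at the
  return site and `Resolve(i, H, I)`, derive `y_k ↦_caller I`. -/
  | rPBU1 {caller callee : FnName} {i j : Site} {ys xs zs : List Reg} {k : ℕ}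
      {zk yk : Reg} {H I : Obj} :
      RuleName.pbu1 ∈ Γ →
      InstrIn P caller (.call i ys callee xs) → InstrIn P callee (.ret j zs) →
      zs[k]? = some zk → ys[k]? = some yk →
      fs callee j (.reg zk) H → Resolve P fs Γ i callee xs H I →
      Derives P fs Γ caller (.reg yk) I
  /-- Partially flow-sensitive Top-Down-1: from the flow-sensitive fact
  `x_k ↦_{caller, i} H` at the call site `i` and `Resolve(i, I, H)`, derive
  `f_k ↦_callee I` for the `k`-th formal of the callee. -/
  | rPTD1 {caller callee : FnName} {i j : Site} {ys xs frms : List Reg} {k : ℕ}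
      {xk fk : Reg} {H I : Obj} :
      RuleName.ptd1 ∈ Γ →
      InstrIn P caller (.call i ys callee xs) →
      xs[k]? = some xk → FnDecl P callee j frms → frms[k]? = some fk →
      fs caller i (.reg xk) H → Resolve P fs Γ i callee xs I H →
      Derives P fs Γ callee (.reg fk) I

/-- `Resolve P fs Γ i callee xs J H`: at the call site `i : y⃗ = callee(x⃗)`, the
abstract object `J` of the callee resolves to the abstract object `H` of the
caller.  Allocation sites resolve to themselves; first-level formals
`V_{j,k}^{f1}` resolve to the objects the actual argument `x_k` points to in the
caller; second-level formals resolve to objects reachable by one more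
dereference (and, due to their self-loops, by any further dereference). -/
inductive Resolve (P : Program) (fs : FnName → Site → Node → Obj → Prop)
    (Γ : Set RuleName) : Site → FnName → List Reg → Obj → Obj → Prop
  | allocSelf {i : Site} {callee : FnName} {xs : List Reg} {m : Site} {f : Fld} :
      Resolve P fs Γ i callee xs (.allocSite m f) (.allocSite m f)
  | formalBase {i j : Site} {caller callee : FnName} {ys xs frms : List Reg}
      {k : ℕ} {xk : Reg} {f1 : Fld} {H : Obj} :
      InstrIn P caller (.call i ys callee xs) →
      FnDecl P callee j frms → xs[k]? = some xk →
      Derives P fs Γ caller (.reg xk) H →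
      Resolve P fs Γ i callee xs (.formal j k f1 none) (H.setFld f1)
  | formalStep {i j : Site} {caller callee : FnName} {ys xs : List Reg}
      {k : ℕ} {f1 f2 : Fld} {O H : Obj} :
      InstrIn P caller (.call i ys callee xs) →
      Resolve P fs Γ i callee xs (.formal j k f1 none) O →
      Derives P fs Γ caller (.obj O) H →
      Resolve P fs Γ i callee xs (.formal j k f1 (some f2)) (H.setFld f2)
  | formalLoop {i j : Site} {caller callee : FnName} {ys xs : List Reg}
      {k : ℕ} {f1 f2 : Fld} {O H : Obj} :
      InstrIn P caller (.call i ys callee xs) →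
      Resolve P fs Γ i callee xs (.formal j k f1 (some f2)) O →
      Derives P fs Γ caller (.obj O) H →
      Resolve P fs Γ i callee xs (.formal j k f1 (some f2)) (H.setFld f2)

end

/-! ## Rule systems -/

/-- `Γ_DSA = Γ_L ∪ Γ_BU ∪ Γ_TD`. -/
def ΓDSA : Set RuleName := ΓL ∪ ΓBU ∪ ΓTD

/-- `Γ_PFS-DSA`: `Γ_DSA` with the rules Bottom-Up-1 and Top-Down-1 replaced by
their partially flow-sensitive versions. -/
def ΓPFS : Set RuleName := ΓL ∪ {.pbu1, .bu2} ∪ {.ptd1, .td2}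

/-! ## The type-aware analysis `Γ_TeaDsa` -/

/-- A node of a type-aware points-to graph: a register, or a typed abstract
object `H^T` (each allocation site and formal is replicated once per type
tag `T`). -/
inductive TNode
  | reg (r : Reg)
  | obj (o : Obj) (t : Ty)
deriving DecidableEq

/-- The type erasure of a typed node: each typed abstract object `H^T` is
identified with its underlying untyped object `H`. -/
def TNode.erase : TNode → Node
  | .reg r => .reg r
  | .obj o _ => .obj o

/-- The typed `Γ_Formals` edges for the `k`-th formal argument (register `fr`)
of a function declared at site `j`; the newly introduced formal objects carry
the most general type tag `char` (compatible with all types), while the source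
formal objects are replicated once per type tag. -/
inductive TFormalEdge (j : Site) (k : ℕ) (fr : Reg) : TNode → Ty → Obj → Prop
  | arg : TFormalEdge j k fr (.reg fr) (.base .char) (.formal j k .a none)
  | lvlA (T : Ty) :
      TFormalEdge j k fr (.obj (.formal j k .a none) T) (.base .char)
        (.formal j k .a (some .a))
  | lvlB (T : Ty) :
      TFormalEdge j k fr (.obj (.formal j k .b none) T) (.base .char)
        (.formal j k .b (some .a))
  | selfLoop (T : Ty) (f1 f2 : Fld) :
      TFormalEdge j k fr (.obj (.formal j k f1 (some f2)) T) (.base .char)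
        (.formal j k f1 (some f2))

/-! `DerivesT P compat fsT F x T H` formalizes `Γ_TeaDsa ⊢_P x ↦^T_F H`: the
typed fact `x ↦^T H` (`x` may point to the abstract object `H` with type tag
`T`) holds in the points-to relation of function `F`, derived by exhaustively
applying the rules of `Γ_TeaDsa` — the rules of `Γ_PFS-DSA` with the points-to
relation replaced by the typed relation `↦^T` and the Alloc, Load and Store
rules replaced by their type-aware versions `Γ_Ty` with respect to the
type-compatibility partial order `compat` (written `⊑`).  `fsT` is the
externally supplied flow-sensitive typed relation used by the partially
flow-sensitive rules.  It is defined mutually with the typed resolution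
relation `ResolveT`. -/

mutual

inductive DerivesT (P : Program) (compat : Ty → Ty → Prop)
    (fsT : FnName → Site → TNode → Ty → Obj → Prop) :
    FnName → TNode → Ty → Obj → Prop
  /-- Type-aware Alloc: `i: r = alloc()` gives `r ↦^char H_i`. -/
  | rAlloc {F : FnName} {i : Site} {r : Reg} :
      InstrIn P F (.alloc i r) →
      DerivesT P compat fsT F (.reg r) (.base .char) (.allocSite i .a)
  /-- Cast (ignoring types): `r = cast T, p` and `p ↦^X H` give `r ↦^X H`. -/
  | rCast {F : FnName} {r : Reg} {t : Ty} {p : Reg} {X : Ty} {H : Obj} :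
      InstrIn P F (.cast r t p) →
      DerivesT P compat fsT F (.reg p) X H →
      DerivesT P compat fsT F (.reg r) X H
  /-- Type-aware Load: `r = load T* p`, `p ↦^U H`, `T ⊑ U`, `H ↦^X I` give
  `r ↦^X I`. -/
  | rLoad {F : FnName} {r : Reg} {t : PTy} {p : Reg} {U X : Ty} {H I : Obj} :
      InstrIn P F (.load r t p) →
      DerivesT P compat fsT F (.reg p) U H → compat t.pointee U →
      DerivesT P compat fsT F (.obj H U) X I →
      DerivesT P compat fsT F (.reg r) X I
  /-- Type-aware Store: `store r, T* p`, `p ↦^U H`, `U ⊑ T`, `r ↦^X I` give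
  `H ↦^X I`. -/
  | rStore {F : FnName} {r : Reg} {t : PTy} {p : Reg} {U X : Ty} {H I : Obj} :
      InstrIn P F (.store r t p) →
      DerivesT P compat fsT F (.reg p) U H → compat U t.pointee →
      DerivesT P compat fsT F (.reg r) X I →
      DerivesT P compat fsT F (.obj H U) X I
  /-- GEP with field `a`, preserving type tags. -/
  | rGepA {F : FnName} {r : Reg} {t : PTy} {p : Reg} {X : Ty} {H : Obj} :
      InstrIn P F (.gep r t p .a) →
      DerivesT P compat fsT F (.reg p) X H →
      DerivesT P compat fsT F (.reg r) X H
  /-- GEP with field `b`, preserving type tags. -/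
  | rGepB {F : FnName} {r : Reg} {t : PTy} {p : Reg} {X : Ty} {H : Obj} :
      InstrIn P F (.gep r t p .b) →
      DerivesT P compat fsT F (.reg p) X H → H.fld = .a →
      DerivesT P compat fsT F (.reg r) X H.sib
  /-- Typed Formals edges. -/
  | rFormals {F : FnName} {j : Site} {frms : List Reg} {k : ℕ} {fr : Reg}
      {x : TNode} {T : Ty} {H : Obj} :
      FnDecl P F j frms →
      k < frms.length → frms[k]? = some fr → TFormalEdge j k fr x T H →
      DerivesT P compat fsT F x T H
  /-- Typed unification, Incoming rules: two typed objects are grouped only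
  when both the object and its type tag coincide. -/
  | rUIncoming {F : FnName} {x y : TNode} {T U : Ty} {H I : Obj} :
      DerivesT P compat fsT F x T H → DerivesT P compat fsT F x U I →
      DerivesT P compat fsT F y U I →
      DerivesT P compat fsT F y T H
  /-- Typed unification, Outgoing rules. -/
  | rUOutgoing {F : FnName} {x : TNode} {T U V W : Ty} {H I J K : Obj} :
      DerivesT P compat fsT F x T H → DerivesT P compat fsT F (.obj H T) V J →
      DerivesT P compat fsT F x U I → DerivesT P compat fsT F (.obj I U) W K →
      DerivesT P compat fsT F (.obj H T) W K
  /-- Typed partially flow-sensitive Bottom-Up-1. -/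
  | rPBU1 {caller callee : FnName} {i j : Site} {ys xs zs : List Reg} {k : ℕ}
      {zk yk : Reg} {T T' : Ty} {H I : Obj} :
      InstrIn P caller (.call i ys callee xs) → InstrIn P callee (.ret j zs) →
      zs[k]? = some zk → ys[k]? = some yk →
      fsT callee j (.reg zk) T H →
      ResolveT P compat fsT i callee xs H T I T' →
      DerivesT P compat fsT caller (.reg yk) T' I
  /-- Typed Bottom-Up-2. -/
  | rBU2 {caller callee : FnName} {i : Site} {ys xs : List Reg} {y : TNode}
      {S X S' X' : Ty} {J K H I : Obj} :
      InstrIn P caller (.call i ys callee xs) →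
      DerivesT P compat fsT callee y S J →
      DerivesT P compat fsT callee (.obj J S) X K →
      ResolveT P compat fsT i callee xs J S H S' →
      ResolveT P compat fsT i callee xs K X I X' →
      DerivesT P compat fsT caller (.obj H S') X' I
  /-- Typed partially flow-sensitive Top-Down-1. -/
  | rPTD1 {caller callee : FnName} {i j : Site} {ys xs frms : List Reg} {k : ℕ}
      {xk fk : Reg} {T T' : Ty} {H I : Obj} :
      InstrIn P caller (.call i ys callee xs) →
      xs[k]? = some xk → FnDecl P callee j frms → frms[k]? = some fk →
      fsT caller i (.reg xk) T H →
      ResolveT P compat fsT i callee xs I T' H T →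
      DerivesT P compat fsT callee (.reg fk) T' I
  /-- Typed Top-Down-2. -/
  | rTD2 {caller callee : FnName} {i : Site} {ys xs : List Reg}
      {S X S' X' : Ty} {H I J K : Obj} :
      InstrIn P caller (.call i ys callee xs) →
      DerivesT P compat fsT caller (.obj H S) X I →
      ResolveT P compat fsT i callee xs J S' H S → IsFormalOf P callee J →
      ResolveT P compat fsT i callee xs K X' I X → IsFormalOf P callee K →
      DerivesT P compat fsT callee (.obj J S') X' K

/-- `ResolveT P compat fsT i callee xs J T H T'`: at the call site
`i : y⃗ = callee(x⃗)`, the typed abstract object `J^T` of the callee resolves to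
the typed abstract object `H^{T'}` of the caller.  Typed allocation sites
resolve to themselves; typed formals resolve to the typed objects reachable
from the actual arguments in the caller, preserving type tags. -/
inductive ResolveT (P : Program) (compat : Ty → Ty → Prop)
    (fsT : FnName → Site → TNode → Ty → Obj → Prop) :
    Site → FnName → List Reg → Obj → Ty → Obj → Ty → Prop
  | allocSelf {i : Site} {callee : FnName} {xs : List Reg} {m : Site} {f : Fld}
      {T : Ty} :
      ResolveT P compat fsT i callee xs (.allocSite m f) T (.allocSite m f) T
  | formalBase {i j : Site} {caller callee : FnName} {ys xs frms : List Reg}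
      {k : ℕ} {xk : Reg} {f1 : Fld} {T : Ty} {H : Obj} :
      InstrIn P caller (.call i ys callee xs) →
      FnDecl P callee j frms → xs[k]? = some xk →
      DerivesT P compat fsT caller (.reg xk) T H →
      ResolveT P compat fsT i callee xs (.formal j k f1 none) T (H.setFld f1) T
  | formalStep {i j : Site} {caller callee : FnName} {ys xs : List Reg}
      {k : ℕ} {f1 f2 : Fld} {T U X : Ty} {O H : Obj} :
      InstrIn P caller (.call i ys callee xs) →
      ResolveT P compat fsT i callee xs (.formal j k f1 none) T O U →
      DerivesT P compat fsT caller (.obj O U) X H →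
      ResolveT P compat fsT i callee xs (.formal j k f1 (some f2)) X
        (H.setFld f2) X
  | formalLoop {i j : Site} {caller callee : FnName} {ys xs : List Reg}
      {k : ℕ} {f1 f2 : Fld} {T U X : Ty} {O H : Obj} :
      InstrIn P caller (.call i ys callee xs) →
      ResolveT P compat fsT i callee xs (.formal j k f1 (some f2)) T O U →
      DerivesT P compat fsT caller (.obj O U) X H →
      ResolveT P compat fsT i callee xs (.formal j k f1 (some f2)) X
        (H.setFld f2) X

end

/-- The type erasure of the externally supplied flow-sensitive typed relation:
`x ↦_{F,i} H` holds iff some typed fact `tx ↦^T_{F,i} H` erases to it. -/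
def eraseFs (fsT : FnName → Site → TNode → Ty → Obj → Prop) :
    FnName → Site → Node → Obj → Prop :=
  fun F i x H => ∃ (tx : TNode) (T : Ty), tx.erase = x ∧ fsT F i tx T H


section Erase

lemma memPFS : ∀ r : RuleName, r ≠ .bu1 → r ≠ .td1 → r ∈ ΓPFS := by
  intro r h1 h2
  simp only [ΓPFS, ΓL, ΓI, ΓFld, ΓU, ΓFormals, Set.mem_union, Set.mem_insert_iff,
    Set.mem_singleton_iff]
  cases r <;> simp_all

lemma TFormalEdge.erase_edge {j k fr} {x : TNode} {T H}
    (h : TFormalEdge j k fr x T H) : FormalEdge j k fr x.erase H := by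
  cases h <;> first
    | exact .arg
    | exact .lvlA
    | exact .lvlB
    | exact .selfLoop _ _

lemma eraseD {P : Program} {compat : Ty → Ty → Prop}
    {fsT : FnName → Site → TNode → Ty → Obj → Prop}
    {F : FnName} {tx : TNode} {T : Ty} {H : Obj}
    (h : DerivesT P compat fsT F tx T H) :
    Derives P (eraseFs fsT) ΓPFS F tx.erase H := by
  refine DerivesT.rec
    (motive_1 := fun F tx T H _ => Derives P (eraseFs fsT) ΓPFS F tx.erase H)
    (motive_2 := fun i callee xs J T H' T' _ =>
      Resolve P (eraseFs fsT) ΓPFS i callee xs J H')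
    ?_ ?_ ?_ ?_ ?_ ?_ ?_ ?_ ?_ ?_ ?_ ?_ ?_ ?_ ?_ ?_ ?_ h
  · intro F i r a
    exact Derives.rAlloc (memPFS _ (by simp) (by simp)) a
  · intro F r t p X H a _ ih
    exact Derives.rCast (memPFS _ (by simp) (by simp)) a ih
  · intro F r t p U X H I a _ _ _ ih1 ih2
    exact Derives.rLoad (memPFS _ (by simp) (by simp)) a ih1 ih2
  · intro F r t p U X H I a _ _ _ ih1 ih2
    exact Derives.rStore (memPFS _ (by simp) (by simp)) a ih1 ih2
  · intro F r t p X H a _ ih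
    exact Derives.rGepA (memPFS _ (by simp) (by simp)) a ih
  · intro F r t p X H a _ hfld ih
    exact Derives.rGepB (memPFS _ (by simp) (by simp)) a ih hfld
  · intro F j frms k fr x T H a a1 a2 a3
    exact Derives.rFormals (memPFS _ (by simp) (by simp)) a a1 a2 a3.erase_edge
  · intro F x y T U H I _ _ _ ih1 ih2 ih3
    exact Derives.rUIncoming (memPFS _ (by simp) (by simp)) ih1 ih2 ih3
  · intro F x T U V W H I J K _ _ _ _ ih1 ih2 ih3 ih4
    exact Derives.rUOutgoing (memPFS _ (by simp) (by simp)) ih1 ih2 ih3 ih4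
  · intro caller callee i j ys xs zs k zk yk T T' H I a a1 a2 a3 a4 _ ihr
    exact Derives.rPBU1 (memPFS _ (by simp) (by simp)) a a1 a2 a3
      ⟨.reg zk, T, rfl, a4⟩ ihr
  · intro caller callee i ys xs y S X S' X' J K H I a _ _ _ _ ih1 ih2 ihr1 ihr2
    exact Derives.rBU2 (memPFS _ (by simp) (by simp)) a ih1 ih2 ihr1 ihr2
  · intro caller callee i j ys xs frms k xk fk T T' H I a a1 a2 a3 a4 _ ihr
    exact Derives.rPTD1 (memPFS _ (by simp) (by simp)) a a1 a2 a3
      ⟨.reg xk, T, rfl, a4⟩ ihr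
  · intro caller callee i ys xs S X S' X' H I J K a _ _ hJ _ hK ih ihr1 ihr2
    exact Derives.rTD2 (memPFS _ (by simp) (by simp)) a ih ihr1 hJ ihr2 hK
  · intro i callee xs m f T
    exact Resolve.allocSelf
  · intro i j caller callee ys xs frms k xk f1 T H a a1 a2 _ ih
    exact Resolve.formalBase a a1 a2 ih
  · intro i j caller callee ys xs k f1 f2 T U X O H a _ _ ihr ih
    exact Resolve.formalStep a ihr ih
  · intro i j caller callee ys xs k f1 f2 T U X O H a _ _ ihr ih
    exact Resolve.formalLoop a ihr ih

end Erase

/-- **Theorem 2 (type-awareness does not lose precision).**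
Let `compat` (written `⊑`) be a type-compatibility partial order on types
(every type is compatible with `char`, every pointer type with `char*`, each
type with itself, and `int` and `float` are incompatible).  Let `fsT` be the
externally supplied flow-sensitive relation, whose type erasure is a sound
subset of the `Γ_PFS-DSA` points-to relation (`x ↦_{F,i} H` implies
`Γ_PFS-DSA ⊢_P x ↦_F H`).  Then for every program `P`, function `F`, register
or abstract object `x`, abstract object `H` and type `T`: if
`Γ_PFS-DSA ⊬_P x ↦_F H`, then `Γ_TeaDsa ⊬_P x ↦^T_F H`.  Equivalently, every
typed fact `x ↦^T_F H` derivable by `Γ_TeaDsa` has its type-erased counterpart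
`x ↦_F H` derivable by `Γ_PFS-DSA`: the type-aware analysis is at least as
precise as the type-unaware one. -/
theorem teadsa_at_least_as_precise_as_pfs_dsa
    (P : Program) (compat : Ty → Ty → Prop)
    (hrefl : ∀ t : Ty, compat t t)
    (htrans : ∀ a b c : Ty, compat a b → compat b c → compat a c)
    (hantisymm : ∀ a b : Ty, compat a b → compat b a → a = b)
    (hchar : ∀ t : Ty, compat t (.base .char))
    (hptr : ∀ pt : PTy, compat pt.toTy (.ptr1 .char))
    (hint_float : ¬ compat (.base .int) (.base .float) ∧
                  ¬ compat (.base .float) (.base .int))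
    (fsT : FnName → Site → TNode → Ty → Obj → Prop)
    (hfs : ∀ (F : FnName) (i : Site) (x : Node) (H : Obj),
      eraseFs fsT F i x H → Derives P (eraseFs fsT) ΓPFS F x H) :
    ∀ (F : FnName) (x : Node) (H : Obj) (T : Ty),
      ¬ Derives P (eraseFs fsT) ΓPFS F x H →
      ∀ tx : TNode, tx.erase = x → ¬ DerivesT P compat fsT F tx T H := by
  intro F x H T hnot tx htx hT
  exact hnot (htx ▸ eraseD hT)
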